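/- For every real number α > 0, with c₀ = √(tanh α), the identity T₂,₀·(S₂,₀·(c_g E₃,₋₁ + F₃,₋₁) + S₂,₋₁·(−c_g A₃,₀ + B₃,₀)) − S₂,₋₁ S₂,₀·(c_g D₃,₀ + E₃,₀) = 0 holds, where S₂,₋₁ = (α + 5c₀² − 2α c₀⁴ − c₀⁶ + α c₀⁸)/(4c₀²), S₂,₀ = S₂,₋₁/c₀, T₂,₀ = (α² − 2α c₀² + (1 − 2α²)c₀⁴ − 2α c₀⁶ + α² c₀⁸)/(4c₀²), c_g = (α(1 − c₀⁴) − c₀²)/(2c₀), A₃,₋₁ = 1 + α/c₀² − α c₀², E₃,₋₁ = (1 − c₀⁴)/(2c₀), F₃,₋₁ = (3 − c₀⁴)/2, E₃,₀ = −α + c₀² − α c₀⁴, A₃,₀ = −E₃,₋₁/c₀, B₃,₀ = F₃,₋₁/c₀, and D₃,₀ = c₀ A₃,₋₁. -/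
import Mathlib


/-- `c₀ = √(tanh α)`, the leading-order wave speed. -/
noncomputable def c₀ (α : ℝ) : ℝ := Real.sqrt (Real.tanh α)

/-- The second-order coefficient `S₂,₋₁(α)`. -/
noncomputable def S2m1 (α : ℝ) : ℝ :=
  (α + 5 * c₀ α ^ 2 - 2 * α * c₀ α ^ 4 - c₀ α ^ 6 + α * c₀ α ^ 8) / (4 * c₀ α ^ 2)

/-- The second-order coefficient `S₂,₀(α) = S₂,₋₁(α)/c₀`. -/
noncomputable def S20 (α : ℝ) : ℝ := S2m1 α / c₀ α

/-- The second-order coefficient `T₂,₀(α)`. -/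
noncomputable def T20 (α : ℝ) : ℝ :=
  (α ^ 2 - 2 * α * c₀ α ^ 2 + (1 - 2 * α ^ 2) * c₀ α ^ 4 - 2 * α * c₀ α ^ 6
    + α ^ 2 * c₀ α ^ 8) / (4 * c₀ α ^ 2)

/-- The group velocity `c_g(α) = (α(1 − c₀⁴) − c₀²)/(2c₀)`. -/
noncomputable def cg (α : ℝ) : ℝ := (α * (1 - c₀ α ^ 4) - c₀ α ^ 2) / (2 * c₀ α)

/-- The third-order coefficient `A₃,₋₁(α) = 1 + α/c₀² − α c₀²`. -/
noncomputable def A3m1 (α : ℝ) : ℝ := 1 + α / c₀ α ^ 2 - α * c₀ α ^ 2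

/-- The third-order coefficient `E₃,₋₁(α) = (1 − c₀⁴)/(2c₀)`. -/
noncomputable def E3m1 (α : ℝ) : ℝ := (1 - c₀ α ^ 4) / (2 * c₀ α)

/-- The third-order coefficient `F₃,₋₁(α) = (3 − c₀⁴)/2`. -/
noncomputable def F3m1 (α : ℝ) : ℝ := (3 - c₀ α ^ 4) / 2

/-- The third-order coefficient `E₃,₀(α) = −α + c₀² − α c₀⁴`. -/
noncomputable def E30 (α : ℝ) : ℝ := -α + c₀ α ^ 2 - α * c₀ α ^ 4

/-- The third-order coefficient `A₃,₀(α) = −E₃,₋₁(α)/c₀`. -/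
noncomputable def A30 (α : ℝ) : ℝ := -E3m1 α / c₀ α

/-- The third-order coefficient `B₃,₀(α) = F₃,₋₁(α)/c₀`. -/
noncomputable def B30 (α : ℝ) : ℝ := F3m1 α / c₀ α

/-- The third-order coefficient `D₃,₀(α) = c₀ A₃,₋₁(α)`. -/
noncomputable def D30 (α : ℝ) : ℝ := c₀ α * A3m1 α

/-- For every real `α > 0`,
`T₂,₀(S₂,₀(c_g E₃,₋₁ + F₃,₋₁) + S₂,₋₁(−c_g A₃,₀ + B₃,₀)) − S₂,₋₁S₂,₀(c_g D₃,₀ + E₃,₀) = 0`. -/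
theorem third_order_identity (α : ℝ) (hα : 0 < α) :
    T20 α * (S20 α * (cg α * E3m1 α + F3m1 α) + S2m1 α * (-(cg α) * A30 α + B30 α))
      - S2m1 α * S20 α * (cg α * D30 α + E30 α) = 0 := by
  have ht : 0 < Real.tanh α := by
    rw [Real.tanh_eq_sinh_div_cosh]
    exact div_pos (Real.sinh_pos_iff.mpr hα) (Real.cosh_pos α)
  have hc : 0 < c₀ α := Real.sqrt_pos.mpr ht
  have hc' : c₀ α ≠ 0 := ne_of_gt hc
  simp only [T20, S20, S2m1, cg, A30, B30, D30, E30, A3m1, E3m1, F3m1]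
  field_simp
  ring
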